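/- Let d ≥ 1, let 0 < L ≤ L̄, let θ ≥ 1, let X ⊆ ℝ^d be nonempty, closed and convex, let f : ℝ^d → ℝ be convex and L-Lipschitz, let x₀, x★ ∈ X, r_ε > 0, and let (g_k)_{k≥0} be vectors in ℝ^d with ‖g_k‖ ≤ Ld for all k. Define recursively r̄_k = max(r_ε, max_{j≤k} ‖x_j − x₀‖), G_{−1} = 0, G_k = Σ_{i=0}^{k} ‖g_i‖², G'_k = 8⁴ θ (log(k+2)+1)² (G_{k−1} + 16 θ d² L̄²), η_k = r̄_k / √(G'_k), μ_k = d r̄_k / (k+1)², and x_{k+1} = Π_X(x_k − η_k g_k). Set Δ_k = ∇f_{μ_k}(x_k) − g_k, s₀ = ‖x₀ − x★‖, s̄_t = max_{k≤t} ‖x_k − x★‖, and x̄_t = (Σ_{k=0}^{t−1} r̄_k)^{−1} Σ_{k=0}^{t−1} r̄_k x_k. Fix t ≥ 1 and assume |Σ_{k=0}^{t−1} r̄_k ⟨Δ_k, x_k − x★⟩| ≤ 8 r̄_{t−1} s̄_{t−1} √(θ G_{t−1} + 4 L² d² θ²). Then f(x̄_t) − f(x★) ≤ 20 θ (r̄_t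 + s₀)(√(G'_{t−1}) + L d) / (Σ_{k=0}^{t−1} r̄_k / r̄_t). -/

import Mathlib

open MeasureTheory Metric Finset
open scoped RealInnerProductSpace

/-- The uniform probability measure on the closed Euclidean unit ball in `ℝ^d`. -/
noncomputable def ballUniform (d : ℕ) : Measure (EuclideanSpace ℝ (Fin d)) :=
  (volume (Metric.closedBall (0 : EuclideanSpace ℝ (Fin d)) 1))⁻¹ •
    volume.restrict (Metric.closedBall 0 1)

/-- The ball-smoothed function `f_μ(x) = E_{u ∼ U(B^d)} [f (x + μ u)]`. -/
noncomputable def smoothed (d : ℕ) (f : EuclideanSpace ℝ (Fin d) → ℝ) (μ : ℝ)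
    (x : EuclideanSpace ℝ (Fin d)) : ℝ :=
  ∫ u, f (x + μ • u) ∂(ballUniform d)

/-- The uniform (rotation-invariant) probability measure on the unit sphere `S^{d-1}`,
realized as the pushforward of the uniform measure on the unit ball under radial
normalization `u ↦ u / ‖u‖`. -/
noncomputable def sphereUniform (d : ℕ) : Measure (EuclideanSpace ℝ (Fin d)) :=
  (ballUniform d).map (fun u => ‖u‖⁻¹ • u)

/-!
`f_μ` is convex, differentiable (Rademacher, then differentiation under the integral) and within
`Lμ` of `f`; together with the fact that `Π_X` moves no point farther from a point of `X`, this
gives for every step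
`r̄_k (f x_k - f x★) ≤ √G'_k / 2 · (‖x_k - x★‖² - ‖x_{k+1} - x★‖²) + r̄_k² ‖g_k‖² / (2 √G'_k)
  + r̄_k ⟪Δ_k, x_k - x★⟫ + 2 L μ_k r̄_k`.
Summed over `k < t`, the first sum is handled by Abel summation (`√G'_k` is nondecreasing and
`‖x_k - x★‖` stays within `r̄_t` of `s₀`), the second telescopes in `√(G_{k-1} + c)` because every
`‖g_k‖²` is at most `c = 16θd²L̄²`, the third is the noise hypothesis, and the smoothing bias is at
most `4Ld r̄_t²` because `∑ 1/(k+1)² ≤ 2`. Each is `O((√G'_{t-1} + Ld) r̄_t (s₀ + r̄_t))`, and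
Jensen's inequality for the `r̄`-weighted average `x̄_t` finishes.
-/

open ProbabilityTheory Filter Set

section InnerProductSpace

variable {F : Type*} [NormedAddCommGroup F] [InnerProductSpace ℝ F]

lemma ConvexOn.sub_le_inner_gradient [CompleteSpace F] {φ : F → ℝ} (hφ : ConvexOn ℝ univ φ)
    {x : F} (hx : DifferentiableAt ℝ φ x) (y : F) : φ x - φ y ≤ ⟪gradient φ x, x - y⟫ := by
  have hline : ConvexOn ℝ univ (φ ∘ AffineMap.lineMap (k := ℝ) x y) := by
    simpa using hφ.comp_affineMap (AffineMap.lineMap (k := ℝ) x y)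
  have hderiv : HasDerivAt (φ ∘ AffineMap.lineMap (k := ℝ) x y) ⟪gradient φ x, y - x⟫ 0 := by
    have hφ' : HasFDerivAt φ (InnerProductSpace.toDual ℝ F (gradient φ x))
        (AffineMap.lineMap (k := ℝ) x y 0) := by
      simpa using hx.hasGradientAt.hasFDerivAt
    simpa using hφ'.comp_hasDerivAt (0 : ℝ) AffineMap.hasDerivAt_lineMap
  have hslope := hline.le_slope_of_hasDerivAt (mem_univ 0) (mem_univ 1) zero_lt_one hderiv
  simp only [slope_def_field, Function.comp_apply, AffineMap.lineMap_apply_zero,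
    AffineMap.lineMap_apply_one, sub_zero, div_one] at hslope
  rw [← neg_sub y x, inner_neg_right]
  linarith

lemma Convex.norm_sub_le_of_isNearest {K : Set F} (hK : Convex ℝ K) {z p y : F} (hp : p ∈ K)
    (hmin : ∀ w ∈ K, ‖z - p‖ ≤ ‖z - w‖) (hy : y ∈ K) : ‖p - y‖ ≤ ‖z - y‖ := by
  have : Nonempty K := ⟨⟨p, hp⟩⟩
  have hinf : ‖z - p‖ = ⨅ w : K, ‖z - w‖ :=
    le_antisymm (le_ciInf fun w => hmin w w.2)
      (ciInf_le ⟨0, by rintro _ ⟨w, rfl⟩; exact norm_nonneg _⟩ (⟨p, hp⟩ : K))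
  have hvar := (norm_eq_iInf_iff_real_inner_le_zero hK hp).1 hinf y hy
  have hsplit : z - y = (z - p) - (y - p) := by abel
  rw [← pow_le_pow_iff_left₀ (norm_nonneg _) (norm_nonneg _) two_ne_zero, hsplit,
    norm_sub_rev p y, norm_sub_sq_real (z - p)]
  nlinarith [sq_nonneg ‖z - p‖]

lemma mul_inner_le_of_projected_step {a r : ℝ} (ha : 0 < a) {x g p y : F}
    (h : ‖p - y‖ ≤ ‖x - (r / a) • g - y‖) :
    r * ⟪g, x - y⟫ ≤ a / 2 * (‖x - y‖ ^ 2 - ‖p - y‖ ^ 2) + r ^ 2 * ‖g‖ ^ 2 / (2 * a) := by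
  have hsq : ‖p - y‖ ^ 2 ≤ ‖x - y‖ ^ 2 - 2 * (r / a) * ⟪g, x - y⟫ + (r / a) ^ 2 * ‖g‖ ^ 2 := by
    calc ‖p - y‖ ^ 2 ≤ ‖(x - y) - (r / a) • g‖ ^ 2 := by
          rw [sub_right_comm]; gcongr
      _ = _ := by
          rw [norm_sub_sq_real, real_inner_smul_right, norm_smul, mul_pow, Real.norm_eq_abs,
            sq_abs, real_inner_comm]
          ring
  have hlin : a / 2 * (2 * (r / a) * ⟪g, x - y⟫) = r * ⟪g, x - y⟫ := by field_simp
  have hquad : a / 2 * ((r / a) ^ 2 * ‖g‖ ^ 2) = r ^ 2 * ‖g‖ ^ 2 / (2 * a) := by field_simp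
  nlinarith

end InnerProductSpace

lemma ConvexOn.map_centerMass_sub_le {ι E : Type*} [AddCommGroup E] [Module ℝ E] {f : E → ℝ}
    (hf : ConvexOn ℝ univ f) {s : Finset ι} {w : ι → ℝ} {p : ι → E}
    (hw₀ : ∀ i ∈ s, 0 ≤ w i) (hw : 0 < ∑ i ∈ s, w i) (y : E) :
    f (s.centerMass w p) - f y ≤ (∑ i ∈ s, w i)⁻¹ * ∑ i ∈ s, w i * (f (p i) - f y) := by
  have h := hf.map_centerMass_le (p := p) hw₀ hw fun _ _ => mem_univ _
  simp only [centerMass, smul_eq_mul, Function.comp_apply] at h ⊢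
  simp only [mul_sub, sum_sub_distrib, ← sum_mul, ← mul_assoc, inv_mul_cancel₀ hw.ne', one_mul]
  linarith

section Smoothing

variable {d : ℕ}

instance : IsProbabilityMeasure (ballUniform d) :=
  cond_isProbabilityMeasure_of_finite (measure_closedBall_pos _ _ one_pos).ne'
    measure_closedBall_lt_top.ne

lemma integrable_ballUniform_of_continuous {φ : EuclideanSpace ℝ (Fin d) → ℝ}
    (hφ : Continuous φ) : Integrable φ (ballUniform d) :=
  (hφ.continuousOn.integrableOn_compact (isCompact_closedBall 0 1)).smul_measure
    (by simp [(measure_closedBall_pos volume (0 : EuclideanSpace ℝ (Fin d)) one_pos).ne'])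

lemma ae_norm_le_one_ballUniform : ∀ᵐ u ∂(ballUniform d), ‖u‖ ≤ 1 := by
  filter_upwards [ae_cond_mem measurableSet_closedBall] with u hu
  simpa using hu

lemma abs_smoothed_sub_le {K : NNReal} {f : EuclideanSpace ℝ (Fin d) → ℝ}
    (hf : LipschitzWith K f) {μ : ℝ} (hμ : 0 ≤ μ) (x : EuclideanSpace ℝ (Fin d)) :
    |smoothed d f μ x - f x| ≤ K * μ := by
  have hint : Integrable (fun u => f (x + μ • u)) (ballUniform d) :=
    integrable_ballUniform_of_continuous (by have := hf.continuous; fun_prop)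
  calc |smoothed d f μ x - f x| = ‖∫ u, (f (x + μ • u) - f x) ∂(ballUniform d)‖ := by
        rw [integral_sub hint (integrable_const _), integral_const, Real.norm_eq_abs]
        simp [smoothed]
    _ ≤ K * μ := by
        refine (norm_integral_le_of_norm_le_const (C := K * μ) ?_).trans_eq (by simp)
        filter_upwards [ae_norm_le_one_ballUniform] with u hu
        calc ‖f (x + μ • u) - f x‖ ≤ K * ‖x + μ • u - x‖ := by
              simpa [dist_eq_norm] using hf.dist_le_mul (x + μ • u) x
          _ ≤ K * μ := by
              rw [add_sub_cancel_left, norm_smul, Real.norm_of_nonneg hμ]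
              gcongr
              exact mul_le_of_le_one_right hμ hu

lemma convexOn_smoothed {f : EuclideanSpace ℝ (Fin d) → ℝ} (hconv : ConvexOn ℝ univ f)
    (hf : Continuous f) (μ : ℝ) : ConvexOn ℝ univ (smoothed d f μ) := by
  refine ⟨convex_univ, fun x _ y _ a b ha hb hab => ?_⟩
  have hint : ∀ z, Integrable (fun u => f (z + μ • u)) (ballUniform d) := fun z =>
    integrable_ballUniform_of_continuous (by fun_prop)
  calc smoothed d f μ (a • x + b • y)
      ≤ ∫ u, (a * f (x + μ • u) + b * f (y + μ • u)) ∂(ballUniform d) := by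
        refine integral_mono (hint _) (((hint x).const_mul a).add ((hint y).const_mul b))
          fun u => ?_
        have hsplit : a • x + b • y + μ • u = a • (x + μ • u) + b • (y + μ • u) := by
          obtain rfl : b = 1 - a := by linarith
          module
        simpa only [hsplit, smul_eq_mul] using
          hconv.2 (mem_univ (x + μ • u)) (mem_univ (y + μ • u)) ha hb hab
    _ = a * smoothed d f μ x + b * smoothed d f μ y := by
        rw [integral_add ((hint x).const_mul a) ((hint y).const_mul b),
          integral_const_mul, integral_const_mul]
        rfl

lemma differentiableAt_smoothed {K : NNReal} {f : EuclideanSpace ℝ (Fin d) → ℝ}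
    (hf : LipschitzWith K f) {μ : ℝ} (hμ : μ ≠ 0) (x₀ : EuclideanSpace ℝ (Fin d)) :
    DifferentiableAt ℝ (smoothed d f μ) x₀ := by
  have hcont := hf.continuous
  have hshift (v : EuclideanSpace ℝ (Fin d)) : LipschitzWith K fun x => f (x + v) := by
    simpa [Function.comp_def] using hf.comp (IsometryEquiv.addRight v).isometry.lipschitz
  -- Rademacher for `u ↦ f (x₀ + μ • u)`, pulled back to `f` through `y ↦ μ⁻¹ • (y - x₀)`
  have hdiff : ∀ᵐ u ∂(ballUniform d), DifferentiableAt ℝ f (x₀ + μ • u) := by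
    have hg : LipschitzWith (K * ‖μ‖₊) fun u : EuclideanSpace ℝ (Fin d) => f (x₀ + μ • u) := by
      simpa [Function.comp_def] using
        hf.comp ((IsometryEquiv.addLeft x₀).isometry.lipschitz.comp (lipschitzWith_smul μ))
    filter_upwards [cond_absolutelyContinuous.ae_le hg.ae_differentiableAt] with u hu
    have hinv : f = (fun u => f (x₀ + μ • u)) ∘ fun y => μ⁻¹ • (y - x₀) := by
      ext y; simp [smul_smul, hμ]
    rw [hinv]
    refine DifferentiableAt.comp _ ?_ (by fun_prop)
    simpa [smul_smul, hμ] using hu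
  have hF := hasFDerivAt_integral_of_dominated_loc_of_lip (μ := ballUniform d)
    (F := fun x u => f (x + μ • u)) (F' := fun u => fderiv ℝ f (x₀ + μ • u))
    (bound := fun _ => (K : ℝ)) (s := univ) univ_mem
    (Eventually.of_forall fun x =>
      (integrable_ballUniform_of_continuous (by fun_prop)).aestronglyMeasurable)
    (integrable_ballUniform_of_continuous (by fun_prop))
    ((measurable_fderiv ℝ f).comp (by fun_prop)).aestronglyMeasurable
    (Eventually.of_forall fun u => by simpa using hshift (μ • u))
    (integrable_const _)
    (hdiff.mono fun u hu => hu.hasFDerivAt.comp x₀ ((hasFDerivAt_id x₀).add_const _))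
  exact hF.2.differentiableAt

lemma sub_le_inner_gradient_smoothed_add {K : NNReal} {f : EuclideanSpace ℝ (Fin d) → ℝ}
    (hconv : ConvexOn ℝ univ f) (hf : LipschitzWith K f) {μ : ℝ} (hμ : 0 < μ)
    (x y : EuclideanSpace ℝ (Fin d)) :
    f x - f y ≤ ⟪gradient (smoothed d f μ) x, x - y⟫ + 2 * K * μ := by
  have hx := abs_smoothed_sub_le hf hμ.le x
  have hy := abs_smoothed_sub_le hf hμ.le y
  have hgrad := (convexOn_smoothed hconv hf.continuous μ).sub_le_inner_gradient
    (differentiableAt_smoothed hf hμ.ne' x) y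
  linarith [(abs_le.1 hx).1, (abs_le.1 hy).2]

lemma mul_sub_le_of_projected_step {K : NNReal} {f : EuclideanSpace ℝ (Fin d) → ℝ}
    (hconv : ConvexOn ℝ univ f) (hf : LipschitzWith K f) {μ a r : ℝ} (hμ : 0 < μ) (ha : 0 < a)
    (hr : 0 ≤ r) {x g p y : EuclideanSpace ℝ (Fin d)} (hp : ‖p - y‖ ≤ ‖x - (r / a) • g - y‖) :
    r * (f x - f y) ≤ a / 2 * (‖x - y‖ ^ 2 - ‖p - y‖ ^ 2) + r ^ 2 * ‖g‖ ^ 2 / (2 * a)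
      + r * ⟪gradient (smoothed d f μ) x - g, x - y⟫ + r * (2 * K * μ) := by
  have hgap := mul_le_mul_of_nonneg_left (sub_le_inner_gradient_smoothed_add hconv hf hμ x y) hr
  have hproj := mul_inner_le_of_projected_step ha hp
  rw [inner_sub_left]
  linarith

end Smoothing

section Sums

lemma sum_range_succ_mul_sub_succ_le {a b : ℕ → ℝ} {B : ℝ} (ha₀ : 0 ≤ a 0) (ha : Monotone a)
    (n : ℕ) (hb : ∀ k ≤ n, b k ≤ B) :
    ∑ k ∈ range (n + 1), a k * (b k - b (k + 1)) ≤ a n * (B - b (n + 1)) := by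
  induction n with
  | zero => simpa using mul_le_mul_of_nonneg_left (by linarith [hb 0 le_rfl]) ha₀
  | succ n ih =>
    have hn : 0 ≤ a (n + 1) := ha₀.trans (ha (Nat.zero_le _))
    have hbn : 0 ≤ B - b (n + 1) := sub_nonneg.2 (hb (n + 1) le_rfl)
    rw [sum_range_succ]
    calc _ ≤ a n * (B - b (n + 1)) + a (n + 1) * (b (n + 1) - b (n + 1 + 1)) := by
          gcongr; exact ih fun k hk => hb k (by omega)
      _ ≤ a (n + 1) * (B - b (n + 1)) + a (n + 1) * (b (n + 1) - b (n + 1 + 1)) := by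
          gcongr; exact ha (Nat.le_succ n)
      _ = a (n + 1) * (B - b (n + 1 + 1)) := by ring

lemma sum_range_succ_mul_norm_sub_sq_le {E : Type*} [SeminormedAddCommGroup E] {a : ℕ → ℝ}
    {x : ℕ → E} {y : E} {R : ℝ} (ha₀ : 0 ≤ a 0) (ha : Monotone a) (n : ℕ)
    (hx : ∀ k ≤ n + 1, ‖x k - x 0‖ ≤ R) :
    ∑ k ∈ range (n + 1), a k * (‖x k - y‖ ^ 2 - ‖x (k + 1) - y‖ ^ 2) ≤
      2 * a n * (R * (2 * ‖x 0 - y‖ + R)) := by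
  have hb : ∀ k ≤ n + 1, |‖x k - y‖ ^ 2 - ‖x 0 - y‖ ^ 2| ≤ R * (2 * ‖x 0 - y‖ + R) := by
    intro k hk
    have hdist : |‖x k - y‖ - ‖x 0 - y‖| ≤ R := by
      calc _ ≤ ‖(x k - y) - (x 0 - y)‖ := abs_norm_sub_norm_le _ _
        _ = ‖x k - x 0‖ := by rw [sub_sub_sub_cancel_right]
        _ ≤ R := hx k hk
    have hsum : ‖x k - y‖ + ‖x 0 - y‖ ≤ 2 * ‖x 0 - y‖ + R := by
      linarith [(abs_le.1 hdist).2]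
    rw [sq_sub_sq, abs_mul, abs_of_nonneg (by positivity : 0 ≤ ‖x k - y‖ + ‖x 0 - y‖), mul_comm]
    exact mul_le_mul hdist hsum (by positivity) ((abs_nonneg _).trans hdist)
  have habel := sum_range_succ_mul_sub_succ_le (b := fun k => ‖x k - y‖ ^ 2 - ‖x 0 - y‖ ^ 2)
    ha₀ ha n fun k hk => (le_abs_self _).trans (hb k (by omega))
  have hlast := neg_le_of_abs_le (hb (n + 1) le_rfl)
  simp only [sub_sub_sub_cancel_right] at habel
  nlinarith [ha₀.trans (ha (Nat.zero_le n))]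

lemma sqrt_mul_sum_range_succ_add_le {θ c : ℝ} {v : ℕ → ℝ} (hθ : 0 ≤ θ) (hv : ∀ k, 0 ≤ v k)
    (hvc : ∀ k, v k ≤ c) (n : ℕ) :
    √(θ * (∑ i ∈ range (n + 1), v i + c)) ≤ 2 * √(θ * (∑ i ∈ range n, v i + c)) := by
  have hS : 0 ≤ ∑ i ∈ range n, v i := sum_nonneg fun i _ => hv i
  rw [show (2 : ℝ) = √(2 ^ 2) by simp, ← Real.sqrt_mul (by positivity), sum_range_succ]
  exact Real.sqrt_le_sqrt (by nlinarith [hvc n, hv n])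

lemma div_sqrt_le_three_mul_sqrt_add_sub_sqrt {s v : ℝ} (hv : 0 ≤ v) (hvs : v ≤ s) :
    v / √s ≤ 3 * (√(s + v) - √s) := by
  rcases (hv.trans hvs).eq_or_lt with rfl | hs
  · simp
  have hA := Real.sqrt_pos.2 hs
  have hB : √(s + v) ^ 2 = √s ^ 2 + v := by
    rw [Real.sq_sqrt (by linarith), Real.sq_sqrt hs.le]
  have hAB : √s ≤ √(s + v) := Real.sqrt_le_sqrt (by linarith)
  have hB2 : √(s + v) ≤ 2 * √s := by nlinarith [Real.sq_sqrt hs.le]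
  rw [div_le_iff₀ hA]
  nlinarith [mul_nonneg (sub_nonneg.2 hAB) (sub_nonneg.2 hB2)]

lemma sum_range_div_sqrt_le {v : ℕ → ℝ} {c : ℝ} (hv : ∀ k, 0 ≤ v k) (hvc : ∀ k, v k ≤ c)
    (t : ℕ) :
    ∑ k ∈ range t, v k / √(∑ i ∈ range k, v i + c) ≤ 3 * √(∑ i ∈ range t, v i + c) := by
  set H : ℕ → ℝ := fun k => √(∑ i ∈ range k, v i + c)
  have hstep (k : ℕ) : v k / H k ≤ 3 * (H (k + 1) - H k) := by
    have hvS : v k ≤ ∑ i ∈ range k, v i + c := by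
      linarith [hvc k, sum_nonneg fun i (_ : i ∈ range k) => hv i]
    simpa only [H, sum_range_succ, add_right_comm] using
      div_sqrt_le_three_mul_sqrt_add_sub_sqrt (hv k) hvS
  calc ∑ k ∈ range t, v k / H k ≤ ∑ k ∈ range t, 3 * (H (k + 1) - H k) :=
        sum_le_sum fun k _ => hstep k
    _ = 3 * (H t - H 0) := by rw [← mul_sum, sum_range_sub]
    _ ≤ 3 * H t := by linarith [Real.sqrt_nonneg (∑ i ∈ range 0, v i + c)]

lemma sum_range_succ_sq_mul_div_le {r a v : ℕ → ℝ} {c : ℝ} (hr₀ : 0 ≤ r 0) (hr : Monotone r)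
    (hv : ∀ k, 0 ≤ v k) (hvc : ∀ k, v k ≤ c) (hc : 0 < c)
    (ha : ∀ k, √(∑ i ∈ range k, v i + c) ≤ a k) (n : ℕ) :
    ∑ k ∈ range (n + 1), r k ^ 2 * v k / (2 * a k) ≤ 3 * r n ^ 2 * a n := by
  have hH (k : ℕ) : 0 < √(∑ i ∈ range k, v i + c) :=
    Real.sqrt_pos.2 (add_pos_of_nonneg_of_pos (sum_nonneg fun i _ => hv i) hc)
  have hsucc : √(∑ i ∈ range (n + 1), v i + c) ≤ 2 * √(∑ i ∈ range n, v i + c) := by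
    simpa using sqrt_mul_sum_range_succ_add_le zero_le_one hv hvc n
  calc ∑ k ∈ range (n + 1), r k ^ 2 * v k / (2 * a k)
      ≤ ∑ k ∈ range (n + 1), r n ^ 2 / 2 * (v k / √(∑ i ∈ range k, v i + c)) := by
        refine sum_le_sum fun k hk => ?_
        have hrk : r k ^ 2 ≤ r n ^ 2 := pow_le_pow_left₀ (hr₀.trans (hr (Nat.zero_le k)))
          (hr (Nat.lt_succ_iff.1 (mem_range.1 hk))) 2
        rw [show r n ^ 2 / 2 * (v k / √(∑ i ∈ range k, v i + c)) =
          r n ^ 2 * v k / (2 * √(∑ i ∈ range k, v i + c)) by ring]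
        have := hv k
        have := hH k
        gcongr
        exact ha k
    _ ≤ r n ^ 2 / 2 * (3 * (2 * a n)) := by
        rw [← mul_sum]
        gcongr
        exact (sum_range_div_sqrt_le hv hvc (n + 1)).trans (by grw [hsucc, ha n])
    _ = 3 * r n ^ 2 * a n := by ring

lemma sum_range_mul_le_of_eq_div_succ_sq {r μ : ℕ → ℝ} {D : ℝ} (hD : 0 ≤ D) (hr₀ : 0 ≤ r 0)
    (hr : Monotone r) (hμ : ∀ k : ℕ, μ k = D * r k / ((k : ℝ) + 1) ^ 2) (n : ℕ) :
    ∑ k ∈ range n, r k * μ k ≤ 2 * D * r n ^ 2 := by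
  have hinv : ∑ k ∈ range n, (((k : ℝ) + 1) ^ 2)⁻¹ ≤ 2 := by
    have := sum_Ioo_inv_sq_le (α := ℝ) 0 (n + 1)
    rw [← Finset.Ico_add_one_left_eq_Ioo, sum_Ico_eq_sum_range] at this
    simpa [add_comm] using this
  calc ∑ k ∈ range n, r k * μ k
      ≤ ∑ k ∈ range n, D * r n ^ 2 * (((k : ℝ) + 1) ^ 2)⁻¹ := by
        refine sum_le_sum fun k hk => ?_
        rw [hμ, mul_div_assoc', div_eq_mul_inv, mul_left_comm, ← sq]
        have := hr (mem_range.1 hk).le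
        have := hr₀.trans (hr (Nat.zero_le k))
        gcongr
    _ ≤ D * r n ^ 2 * 2 := by rw [← mul_sum]; gcongr
    _ = 2 * D * r n ^ 2 := by ring

end Sums

section StepScale

lemma sixty_four_mul_sqrt_le_sqrt_mul_log {θ s : ℝ} (hθ : 0 ≤ θ) (hs : 0 ≤ s) (k : ℕ) :
    64 * √(θ * s) ≤ √(8 ^ 4 * θ * (Real.log ((k : ℝ) + 2) + 1) ^ 2 * s) := by
  have hlog : 0 ≤ Real.log ((k : ℝ) + 2) :=
    Real.log_nonneg (by linarith [k.cast_nonneg (α := ℝ)])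
  rw [Real.le_sqrt (by positivity)
    (mul_nonneg (mul_nonneg (mul_nonneg (by norm_num) hθ) (sq_nonneg _)) hs),
    mul_pow, Real.sq_sqrt (mul_nonneg hθ hs)]
  nlinarith [mul_nonneg hθ hs, mul_nonneg (mul_nonneg hθ hs) hlog]

lemma sqrt_le_sqrt_mul_log {θ s : ℝ} (hθ : 1 ≤ θ) (hs : 0 ≤ s) (k : ℕ) :
    √s ≤ √(8 ^ 4 * θ * (Real.log ((k : ℝ) + 2) + 1) ^ 2 * s) := by
  have hθs : √s ≤ √(θ * s) := Real.sqrt_le_sqrt (le_mul_of_one_le_left hs hθ)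
  linarith [sixty_four_mul_sqrt_le_sqrt_mul_log (θ := θ) (by linarith) hs k, Real.sqrt_nonneg (θ * s)]

lemma eight_mul_sqrt_le_sqrt_mul_log {θ c q : ℝ} {v : ℕ → ℝ} (hθ : 0 ≤ θ)
    (hv : ∀ k, 0 ≤ v k) (hvc : ∀ k, v k ≤ c) (hq : q ≤ θ * c) (n : ℕ) :
    8 * √(θ * ∑ i ∈ range (n + 1), v i + q) ≤
      √(8 ^ 4 * θ * (Real.log ((n : ℝ) + 2) + 1) ^ 2 * (∑ i ∈ range n, v i + c)) := by
  have hS : 0 ≤ ∑ i ∈ range n, v i + c :=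
    add_nonneg (sum_nonneg fun i _ => hv i) ((hv 0).trans (hvc 0))
  have hle : √(θ * ∑ i ∈ range (n + 1), v i + q) ≤ √(θ * (∑ i ∈ range (n + 1), v i + c)) :=
    Real.sqrt_le_sqrt (by linarith)
  linarith [sqrt_mul_sum_range_succ_add_le hθ hv hvc n, sixty_four_mul_sqrt_le_sqrt_mul_log hθ hS n,
    Real.sqrt_nonneg (θ * ∑ i ∈ range (n + 1), v i + q)]

lemma monotone_sqrt_mul_log {θ c : ℝ} (hθ : 0 ≤ θ) (hc : 0 ≤ c) {v : ℕ → ℝ}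
    (hv : ∀ k, 0 ≤ v k) :
    Monotone fun k : ℕ =>
      √(8 ^ 4 * θ * (Real.log ((k : ℝ) + 2) + 1) ^ 2 * (∑ i ∈ range k, v i + c)) := by
  refine monotone_nat_of_le_succ fun k => Real.sqrt_le_sqrt ?_
  have hlog : 0 ≤ Real.log ((k : ℝ) + 2) :=
    Real.log_nonneg (by linarith [k.cast_nonneg (α := ℝ)])
  have hS : 0 ≤ ∑ i ∈ range k, v i := sum_nonneg fun i _ => hv i
  rw [sum_range_succ]
  push_cast
  gcongr
  · linarith
  · linarith [hv k]

end StepScale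

lemma partialSups_norm_sub_le {E : Type*} [SeminormedAddCommGroup E] {x : ℕ → E} {R : ℝ}
    (n : ℕ) (hx : ∀ k ≤ n, ‖x k - x 0‖ ≤ R) (y : E) :
    (partialSups fun k => ‖x k - y‖) n ≤ ‖x 0 - y‖ + R :=
  partialSups_le _ _ _ fun k hk => by
    linarith [norm_sub_le_norm_sub_add_norm_sub (x k) (x 0) y, hx k hk]

lemma sum_mul_sub_le_of_projected_steps {d : ℕ} {K : NNReal} {f : EuclideanSpace ℝ (Fin d) → ℝ}
    (hconv : ConvexOn ℝ univ f) (hf : LipschitzWith K f) {x g : ℕ → EuclideanSpace ℝ (Fin d)}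
    {y : EuclideanSpace ℝ (Fin d)} {r a μ : ℕ → ℝ} {c : ℝ} (hr : ∀ k, 0 < r k)
    (hr_mono : Monotone r) (hx : ∀ k, ‖x k - x 0‖ ≤ r k) (ha_mono : Monotone a) (hc : 0 < c)
    (hgc : ∀ k, ‖g k‖ ^ 2 ≤ c) (ha : ∀ k, √(∑ i ∈ range k, ‖g i‖ ^ 2 + c) ≤ a k)
    (hd : 0 < d) (hμ : ∀ k : ℕ, μ k = d * r k / ((k : ℝ) + 1) ^ 2)
    (hstep : ∀ k, ‖x (k + 1) - y‖ ≤ ‖x k - (r k / a k) • g k - y‖) (n : ℕ) {ρ : ℝ}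
    (hρ : 8 * ρ ≤ a n)
    (hnoise : ∑ k ∈ range (n + 1), r k * ⟪gradient (smoothed d f (μ k)) (x k) - g k, x k - y⟫ ≤
      8 * r n * (partialSups fun k => ‖x k - y‖) n * ρ) :
    ∑ k ∈ range (n + 1), r k * (f (x k) - f y) ≤
      5 * (r (n + 1) + ‖x 0 - y‖) * (a n + K * d) * r (n + 1) := by
  have ha_pos (k : ℕ) : 0 < a k := (Real.sqrt_pos.2 (add_pos_of_nonneg_of_pos
    (sum_nonneg fun i _ => sq_nonneg ‖g i‖) hc)).trans_le (ha k)
  have hμ_pos (k : ℕ) : 0 < μ k := by rw [hμ]; have := hr k; positivity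
  have hsum := sum_le_sum fun k (_ : k ∈ range (n + 1)) =>
    mul_sub_le_of_projected_step hconv hf (hμ_pos k) (ha_pos k) (hr k).le (hstep k)
  simp only [sum_add_distrib] at hsum
  have hdist := sum_range_succ_mul_norm_sub_sq_le (a := fun k => a k / 2) (y := y)
    (div_nonneg (ha_pos 0).le zero_le_two)
    (fun i j hij => div_le_div_of_nonneg_right (ha_mono hij) zero_le_two) n
    fun k hk => (hx k).trans (hr_mono hk)
  have hgrad := sum_range_succ_sq_mul_div_le (hr 0).le hr_mono (fun k => sq_nonneg ‖g k‖) hgc hc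
    ha n
  have hrn : r n ^ 2 ≤ r (n + 1) ^ 2 := pow_le_pow_left₀ (hr n).le (hr_mono n.le_succ) 2
  have hbias : ∑ k ∈ range (n + 1), r k * (2 * K * μ k) ≤ 2 * K * (2 * d * r (n + 1) ^ 2) := by
    simp only [mul_left_comm (r _) (2 * (K : ℝ)), ← mul_sum]
    gcongr
    exact sum_range_mul_le_of_eq_div_succ_sq (Nat.cast_nonneg d) (hr 0).le hr_mono hμ (n + 1)
  have hR := hr (n + 1)
  have hs₀ : 0 ≤ ‖x 0 - y‖ := norm_nonneg _
  have hsup := partialSups_norm_sub_le (R := r (n + 1)) n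
    (fun k hk => (hx k).trans (hr_mono (by omega))) y
  have hsup₀ : 0 ≤ (partialSups fun k => ‖x k - y‖) n :=
    hs₀.trans (le_partialSups_of_le (fun k => ‖x k - y‖) (Nat.zero_le n))
  have hrsup := mul_le_mul (hr_mono n.le_succ) hsup hsup₀ hR.le
  have hnoise' : ∑ k ∈ range (n + 1),
      r k * ⟪gradient (smoothed d f (μ k)) (x k) - g k, x k - y⟫ ≤
      r (n + 1) * (‖x 0 - y‖ + r (n + 1)) * a n := by
    nlinarith [mul_le_mul_of_nonneg_left hρ (mul_nonneg (hr n).le hsup₀),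
      mul_le_mul_of_nonneg_right hrsup (ha_pos n).le]
  have hKd : 0 ≤ K * (d : ℝ) := by positivity
  nlinarith [mul_le_mul_of_nonneg_right hrn (ha_pos n).le,
    mul_nonneg (ha_pos n).le (mul_pos hR hR).le,
    mul_nonneg (mul_nonneg (ha_pos n).le hR.le) hs₀, mul_nonneg (mul_nonneg hKd hR.le) hs₀]

theorem stmt19_general (d : ℕ) (hd : 1 ≤ d) (L Lbar : ℝ) (hL : 0 < L) (hLLbar : L ≤ Lbar)
    (θ : ℝ) (hθ : 1 ≤ θ)
    (X : Set (EuclideanSpace ℝ (Fin d)))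
    (hXconv : Convex ℝ X)
    (f : EuclideanSpace ℝ (Fin d) → ℝ)
    (hconv : ConvexOn ℝ Set.univ f)
    (hlip : ∀ x y, |f x - f y| ≤ L * ‖x - y‖)
    -- `proj` is the Euclidean metric projection onto `X`
    (proj : EuclideanSpace ℝ (Fin d) → EuclideanSpace ℝ (Fin d))
    (hprojMem : ∀ z, proj z ∈ X)
    (hprojMin : ∀ z, ∀ y ∈ X, ‖z - proj z‖ ≤ ‖z - y‖)
    (x : ℕ → EuclideanSpace ℝ (Fin d)) (xstar : EuclideanSpace ℝ (Fin d))
    (hxstar : xstar ∈ X)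
    (reps : ℝ) (hreps : 0 < reps)
    (g : ℕ → EuclideanSpace ℝ (Fin d)) (hgbdd : ∀ k, ‖g k‖ ≤ L * d)
    (rbar : ℕ → ℝ)
    (hrbar : ∀ k, rbar k = max reps ((Finset.range (k + 1)).sup' Finset.nonempty_range_add_one
      fun j => ‖x j - x 0‖))
    (G : ℕ → ℝ) (hG : ∀ k, G k = ∑ i ∈ Finset.range (k + 1), ‖g i‖ ^ 2)
    (G' : ℕ → ℝ)
    (hG' : ∀ k : ℕ, G' k = 8 ^ 4 * θ * (Real.log ((k : ℝ) + 2) + 1) ^ 2 *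
      ((∑ i ∈ Finset.range k, ‖g i‖ ^ 2) + 16 * θ * (d : ℝ) ^ 2 * Lbar ^ 2))
    (η : ℕ → ℝ) (hη : ∀ k, η k = rbar k / Real.sqrt (G' k))
    (μ : ℕ → ℝ) (hμ : ∀ k : ℕ, μ k = (d : ℝ) * rbar k / ((k : ℝ) + 1) ^ 2)
    (hrec : ∀ k, x (k + 1) = proj (x k - η k • g k))
    (sbar : ℕ → ℝ)
    (hsbar : ∀ k, sbar k = (Finset.range (k + 1)).sup' Finset.nonempty_range_add_one
      fun j => ‖x j - xstar‖)
    (t : ℕ) (ht : 1 ≤ t)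
    (xbar : EuclideanSpace ℝ (Fin d))
    (hxbar : xbar = (∑ k ∈ Finset.range t, rbar k)⁻¹ •
      ∑ k ∈ Finset.range t, rbar k • x k)
    (hnoise : |∑ k ∈ Finset.range t,
        rbar k * ⟪gradient (smoothed d f (μ k)) (x k) - g k, x k - xstar⟫| ≤
      8 * rbar (t - 1) * sbar (t - 1) *
        Real.sqrt (θ * G (t - 1) + 4 * L ^ 2 * (d : ℝ) ^ 2 * θ ^ 2)) :
    f xbar - f xstar ≤
      20 * θ * (rbar t + ‖x 0 - xstar‖) * (Real.sqrt (G' (t - 1)) + L * d) /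
      (∑ k ∈ Finset.range t, rbar k / rbar t) := by
  obtain ⟨n, rfl⟩ : ∃ n, t = n + 1 := ⟨t - 1, by omega⟩
  rw [Nat.add_sub_cancel] at hnoise ⊢
  simp only [← partialSups_eq_sup'_range] at hrbar hsbar
  have hf : LipschitzWith L.toNNReal f := LipschitzWith.of_dist_le_mul fun a b => by
    simpa [dist_eq_norm, Real.coe_toNNReal _ hL.le] using hlip a b
  have hr_pos (k : ℕ) : 0 < rbar k := hrbar k ▸ lt_max_of_lt_left hreps
  have hr_mono : Monotone rbar := fun i j hij => by
    simp only [hrbar]; exact max_le_max le_rfl ((partialSups _).monotone hij)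
  have hr_ge (k : ℕ) : ‖x k - x 0‖ ≤ rbar k :=
    hrbar k ▸ (le_partialSups_of_le (fun j => ‖x j - x 0‖) le_rfl).trans (le_max_right _ _)
  have hd₀ : (0 : ℝ) < d := by exact_mod_cast hd
  have hLsq : L ^ 2 ≤ Lbar ^ 2 := pow_le_pow_left₀ hL.le hLLbar 2
  set c := 16 * θ * (d : ℝ) ^ 2 * Lbar ^ 2
  have hc : 0 < c := by have := hL.trans_le hLLbar; positivity
  have hgc (k : ℕ) : ‖g k‖ ^ 2 ≤ c := by
    calc ‖g k‖ ^ 2 ≤ (L * d) ^ 2 := pow_le_pow_left₀ (norm_nonneg _) (hgbdd k) 2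
      _ ≤ c := by nlinarith [mul_nonneg (sq_nonneg (d : ℝ)) (sq_nonneg Lbar)]
  have hscale (k : ℕ) : √(∑ i ∈ range k, ‖g i‖ ^ 2 + c) ≤ √(G' k) := by
    rw [hG' k]
    exact sqrt_le_sqrt_mul_log hθ (add_nonneg (sum_nonneg fun i _ => sq_nonneg _) hc.le) k
  have hscale_mono : Monotone fun k => √(G' k) := by
    simpa only [hG'] using monotone_sqrt_mul_log (by linarith) hc.le fun k => sq_nonneg ‖g k‖
  have hrad : 8 * √(θ * G n + 4 * L ^ 2 * (d : ℝ) ^ 2 * θ ^ 2) ≤ √(G' n) := by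
    rw [hG n, hG' n]
    refine eight_mul_sqrt_le_sqrt_mul_log (by linarith) (fun k => sq_nonneg ‖g k‖) hgc ?_ n
    nlinarith [mul_le_mul_of_nonneg_left hLsq (by positivity : (0 : ℝ) ≤ (d : ℝ) ^ 2 * θ ^ 2)]
  have hregret := sum_mul_sub_le_of_projected_steps hconv hf hr_pos hr_mono hr_ge hscale_mono hc
    hgc hscale (by omega) hμ (fun k => by
      rw [hrec, ← hη]
      exact hXconv.norm_sub_le_of_isNearest (hprojMem _) (hprojMin _) hxstar) n hrad
    (hsbar n ▸ (le_abs_self _).trans hnoise)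
  rw [Real.coe_toNNReal _ hL.le] at hregret
  have hw : 0 < ∑ k ∈ range (n + 1), rbar k :=
    sum_pos (fun k _ => hr_pos k) nonempty_range_add_one
  have hR := hr_pos (n + 1)
  calc f xbar - f xstar
      ≤ (∑ k ∈ range (n + 1), rbar k)⁻¹ * ∑ k ∈ range (n + 1), rbar k * (f (x k) - f xstar) :=
        hxbar ▸ hconv.map_centerMass_sub_le (fun k _ => (hr_pos k).le) hw xstar
    _ ≤ (∑ k ∈ range (n + 1), rbar k)⁻¹ *
          (20 * θ * (rbar (n + 1) + ‖x 0 - xstar‖) * (√(G' n) + L * d) * rbar (n + 1)) := by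
        gcongr
        refine hregret.trans (mul_le_mul_of_nonneg_right ?_ hR.le)
        gcongr
        linarith
    _ = _ := by rw [← sum_div, div_div_eq_mul_div, div_eq_inv_mul]

theorem stmt19 (d : ℕ) (hd : 1 ≤ d) (L Lbar : ℝ) (hL : 0 < L) (hLLbar : L ≤ Lbar)
    (θ : ℝ) (hθ : 1 ≤ θ)
    (X : Set (EuclideanSpace ℝ (Fin d))) (hXne : X.Nonempty) (hXcl : IsClosed X)
    (hXconv : Convex ℝ X)
    (f : EuclideanSpace ℝ (Fin d) → ℝ)
    (hconv : ConvexOn ℝ Set.univ f)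
    (hlip : ∀ x y, |f x - f y| ≤ L * ‖x - y‖)
    -- `proj` is the Euclidean metric projection onto `X`
    (proj : EuclideanSpace ℝ (Fin d) → EuclideanSpace ℝ (Fin d))
    (hprojMem : ∀ z, proj z ∈ X)
    (hprojMin : ∀ z, ∀ y ∈ X, ‖z - proj z‖ ≤ ‖z - y‖)
    (x : ℕ → EuclideanSpace ℝ (Fin d)) (xstar : EuclideanSpace ℝ (Fin d))
    (hx0 : x 0 ∈ X) (hxstar : xstar ∈ X)
    (reps : ℝ) (hreps : 0 < reps)
    (g : ℕ → EuclideanSpace ℝ (Fin d)) (hgbdd : ∀ k, ‖g k‖ ≤ L * d)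
    (rbar : ℕ → ℝ)
    (hrbar : ∀ k, rbar k = max reps ((Finset.range (k + 1)).sup' Finset.nonempty_range_add_one
      fun j => ‖x j - x 0‖))
    (G : ℕ → ℝ) (hG : ∀ k, G k = ∑ i ∈ Finset.range (k + 1), ‖g i‖ ^ 2)
    (G' : ℕ → ℝ)
    (hG' : ∀ k : ℕ, G' k = 8 ^ 4 * θ * (Real.log ((k : ℝ) + 2) + 1) ^ 2 *
      ((∑ i ∈ Finset.range k, ‖g i‖ ^ 2) + 16 * θ * (d : ℝ) ^ 2 * Lbar ^ 2))
    (η : ℕ → ℝ) (hη : ∀ k, η k = rbar k / Real.sqrt (G' k))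
    (μ : ℕ → ℝ) (hμ : ∀ k : ℕ, μ k = (d : ℝ) * rbar k / ((k : ℝ) + 1) ^ 2)
    (hrec : ∀ k, x (k + 1) = proj (x k - η k • g k))
    (sbar : ℕ → ℝ)
    (hsbar : ∀ k, sbar k = (Finset.range (k + 1)).sup' Finset.nonempty_range_add_one
      fun j => ‖x j - xstar‖)
    (t : ℕ) (ht : 1 ≤ t)
    (xbar : EuclideanSpace ℝ (Fin d))
    (hxbar : xbar = (∑ k ∈ Finset.range t, rbar k)⁻¹ •
      ∑ k ∈ Finset.range t, rbar k • x k)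
    (hnoise : |∑ k ∈ Finset.range t,
        rbar k * ⟪gradient (smoothed d f (μ k)) (x k) - g k, x k - xstar⟫| ≤
      8 * rbar (t - 1) * sbar (t - 1) *
        Real.sqrt (θ * G (t - 1) + 4 * L ^ 2 * (d : ℝ) ^ 2 * θ ^ 2)) :
    f xbar - f xstar ≤
      20 * θ * (rbar t + ‖x 0 - xstar‖) * (Real.sqrt (G' (t - 1)) + L * d) /
      (∑ k ∈ Finset.range t, rbar k / rbar t) :=
  stmt19_general d hd L Lbar hL hLLbar θ hθ X hXconv f hconv hlip proj hprojMem hprojMin x xstar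
    hxstar reps hreps g hgbdd rbar hrbar G hG G' hG' η hη μ hμ hrec sbar hsbar t ht xbar hxbar
    hnoise
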